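/- Let X be a δ-hyperbolic metric space, x₀ ∈ X, and let g₁, …, g_k be isometries of X satisfying d(x₀, g_i x₀) ≥ 2(g_j^{ε} x₀ · g_l^{η} x₀)_{x₀} + 18δ + 1 for all indices and signs except j = l with ε = η. Then for every nonempty reduced word g = s₁s₂⋯sₙ in the letters {g₁^{±1}, …, g_k^{±1}} (reduced meaning s_{i+1} ≠ s_i^{−1}), one has d(x₀, g x₀) ≥ n. In particular g ≠ 1, so ⟨g₁, …, g_k⟩ is free of rank k. -/

import Mathlib

/-!
Let `pₘ = s₁ ⋯ sₘ x₀` be the orbit points along the word. Consecutive points are at distance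
`d(x₀, g_{iₘ} x₀)`, and by equivariance the Gromov product at a corner `pₘ` of its neighbours
is `(sₘ⁻¹ x₀ · sₘ₊₁ x₀)_{x₀}`, which reducedness and the hypothesis make small compared with
both adjacent segments. The four-point condition then propagates the invariant
`2 (pₘ · x₀)_{pₘ₋₁} + 16δ + 1 ≤ d(pₘ₋₁, pₘ)` along the word, and each step of it moves the
point at least `16δ + 1` further away from `x₀`.
-/

/-- The Gromov product `(y ⬝ z)_x = (d(x,y) + d(x,z) - d(y,z))/2`. -/
noncomputable def gromovProd {X : Type*} [MetricSpace X] (x y z : X) : ℝ :=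
  (dist x y + dist x z - dist y z) / 2

def GromovHyperbolic (X : Type*) [MetricSpace X] (δ : ℝ) : Prop :=
  ∀ x y z w : X, gromovProd w x z ≥ min (gromovProd w x y) (gromovProd w y z) - δ

section GromovProduct

variable {X : Type*} [MetricSpace X]

theorem gromovProd_comm (x y z : X) : gromovProd x y z = gromovProd x z y := by
  unfold gromovProd
  rw [dist_comm y z]
  ring

theorem gromovProd_add_gromovProd_swap (x y z : X) :
    gromovProd x y z + gromovProd y x z = dist x y := by
  unfold gromovProd
  rw [dist_comm y x]
  ring

theorem gromovProd_nonneg (x y z : X) : 0 ≤ gromovProd x y z := by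
  have := dist_triangle_left y z x
  unfold gromovProd
  linarith

theorem gromovProd_self_right (x y : X) : gromovProd x y x = 0 := by
  simp [gromovProd, dist_comm y x]

theorem IsometryEquiv.gromovProd_map (e : X ≃ᵢ X) (x y z : X) :
    gromovProd (e x) (e y) (e z) = gromovProd x y z := by
  simp only [gromovProd, e.dist_eq]

theorem GromovHyperbolic.nonneg [Nonempty X] {δ : ℝ} (hδ : GromovHyperbolic X δ) : 0 ≤ δ := by
  inhabit X
  have := hδ default default default default
  rw [min_self] at this
  linarith

/-- Seen from `a`, the point `o` lies behind `c` because `[c, a]` is long and `(a · o)_c` is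
small, so a point `b` that turns away from `c` at `a` also turns away from `o`. -/
theorem GromovHyperbolic.gromovProd_le_of_corner {δ : ℝ} (hδ : GromovHyperbolic X δ)
    {o c a b : X} (hca : 2 * gromovProd a c b + 18 * δ + 1 ≤ dist c a)
    (hinv : 2 * gromovProd c a o + 16 * δ + 1 ≤ dist c a) :
    gromovProd a b o ≤ gromovProd a c b + δ := by
  have hδ0 : 0 ≤ δ := haveI : Nonempty X := ⟨o⟩; hδ.nonneg
  have hsplit := gromovProd_add_gromovProd_swap a c o
  have hthin := hδ c o b a
  rw [dist_comm] at hsplit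
  rw [gromovProd_comm a b o]
  rcases min_choice (gromovProd a c o) (gromovProd a o b) with hmin | hmin <;>
    rw [hmin] at hthin <;> linarith

theorem GromovHyperbolic.mul_le_dist_of_corners {δ : ℝ} (hδ : GromovHyperbolic X δ)
    (p : ℕ → X) (N : ℕ) (hseg : ∀ m < N, 16 * δ + 1 ≤ dist (p m) (p (m + 1)))
    (hcorner : ∀ m, m + 2 ≤ N → 2 * gromovProd (p (m + 1)) (p m) (p (m + 2)) + 18 * δ + 1 ≤
      min (dist (p m) (p (m + 1))) (dist (p (m + 1)) (p (m + 2)))) :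
    N * (16 * δ + 1) ≤ dist (p 0) (p N) := by
  suffices key : ∀ n, n + 1 ≤ N → (n + 1) * (16 * δ + 1) ≤ dist (p 0) (p (n + 1)) ∧
      2 * gromovProd (p n) (p (n + 1)) (p 0) + 16 * δ + 1 ≤ dist (p n) (p (n + 1)) by
    rcases N with _ | n
    · simp
    · exact_mod_cast (key n le_rfl).1
  intro n
  induction n with
  | zero =>
    intro hN
    have h01 := hseg 0 hN
    simp only [Nat.cast_zero, zero_add, one_mul, gromovProd_self_right, mul_zero] at h01 ⊢
    exact ⟨h01, by linarith⟩
  | succ n ih =>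
    intro hN
    obtain ⟨ihdist, ihinv⟩ := ih (by omega)
    have hc := le_min_iff.mp (hcorner n hN)
    have hP := hδ.gromovProd_le_of_corner hc.1 ihinv
    have hexpand : 2 * gromovProd (p (n + 1)) (p (n + 2)) (p 0) =
        dist (p (n + 1)) (p (n + 2)) + dist (p 0) (p (n + 1)) - dist (p 0) (p (n + 2)) := by
      unfold gromovProd
      rw [dist_comm (p (n + 1)) (p 0), dist_comm (p (n + 2)) (p 0)]
      ring
    push_cast
    constructor <;> linarith

end GromovProduct

section OrbitPoints

variable {X : Type*} [MetricSpace X]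

theorem dist_prod_take_succ (L : List (X ≃ᵢ X)) (x : X) (m : ℕ) (hm : m < L.length) :
    dist ((L.take m).prod x) ((L.take (m + 1)).prod x) = dist x (L[m] x) := by
  rw [L.prod_take_succ m hm, IsometryEquiv.mul_apply, IsometryEquiv.dist_eq]

theorem gromovProd_prod_take (L : List (X ≃ᵢ X)) (x : X) (m : ℕ) (hm : m + 1 < L.length) :
    gromovProd ((L.take (m + 1)).prod x) ((L.take m).prod x) ((L.take (m + 2)).prod x) =
      gromovProd x (L[m]⁻¹ x) (L[m + 1] x) := by
  have hprev : (L.take m).prod x = (L.take (m + 1)).prod (L[m]⁻¹ x) := by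
    rw [L.prod_take_succ m (by omega), IsometryEquiv.mul_apply, IsometryEquiv.apply_inv_self]
  rw [hprev, L.prod_take_succ (m + 1) hm, IsometryEquiv.mul_apply,
    IsometryEquiv.gromovProd_map]

theorem GromovHyperbolic.mul_le_dist_prod {δ : ℝ} (hδ : GromovHyperbolic X δ) (x : X)
    (L : List (X ≃ᵢ X)) (hseg : ∀ e ∈ L, 16 * δ + 1 ≤ dist x (e x))
    (hcorner : ∀ m (hm : m + 1 < L.length),
      2 * gromovProd x (L[m]⁻¹ x) (L[m + 1] x) + 18 * δ + 1 ≤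
        min (dist x (L[m] x)) (dist x (L[m + 1] x))) :
    L.length * (16 * δ + 1) ≤ dist x (L.prod x) := by
  have h := hδ.mul_le_dist_of_corners (fun m => (L.take m).prod x) L.length
    (fun m hm => by simpa only [dist_prod_take_succ L x m hm] using hseg _ (L.getElem_mem hm))
    (fun m hm => by
      simpa only [gromovProd_prod_take L x m hm, dist_prod_take_succ L x m (by omega),
        dist_prod_take_succ L x (m + 1) hm] using hcorner m hm)
  simpa using h

end OrbitPoints

section Letters

variable {X : Type*} [MetricSpace X] {k : ℕ}

noncomputable def letter (g : Fin k → (X ≃ᵢ X)) (s : Fin k × Bool) : X ≃ᵢ X :=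
  if s.2 then g s.1 else (g s.1)⁻¹

theorem letter_inv (g : Fin k → (X ≃ᵢ X)) (s : Fin k × Bool) :
    (letter g s)⁻¹ = letter g (s.1, !s.2) := by
  rcases s with ⟨i, _ | _⟩ <;> simp [letter]

theorem dist_letter (g : Fin k → (X ≃ᵢ X)) (s : Fin k × Bool) (x : X) :
    dist x (letter g s x) = dist x (g s.1 x) := by
  rcases s with ⟨i, _ | _⟩
  · rw [letter, if_neg Bool.false_ne_true, dist_comm, ← (g i).dist_eq,
      IsometryEquiv.apply_inv_self]
  · rfl

theorem add_le_dist_letter {δ : ℝ} {x : X} {g : Fin k → (X ≃ᵢ X)}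
    (hpair : ∀ i (s t : Fin k × Bool), s ≠ t →
      2 * gromovProd x (letter g s x) (letter g t x) + 18 * δ + 1 ≤ dist x (g i x))
    (s : Fin k × Bool) : 18 * δ + 1 ≤ dist x (letter g s x) := by
  have hlong := hpair s.1 (s.1, true) (s.1, false) (by simp)
  rw [dist_letter]
  linarith [gromovProd_nonneg x (letter g (s.1, true) x) (letter g (s.1, false) x)]

end Letters

theorem reduced_words_move_basepoint {X : Type*} [MetricSpace X] (δ : ℝ)
    (hδ : ∀ x y z w : X, gromovProd w x z ≥ min (gromovProd w x y) (gromovProd w y z) - δ)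
    (x₀ : X) (k : ℕ) (g : Fin k → (X ≃ᵢ X))
    (hyp : ∀ (i j l : Fin k) (ε η : Bool), (j ≠ l ∨ ε ≠ η) →
      dist x₀ (g i x₀) ≥
        2 * gromovProd x₀ ((if ε then g j else (g j)⁻¹) x₀)
            ((if η then g l else (g l)⁻¹) x₀) + 18 * δ + 1) :
    ∀ (n : ℕ) (w : Fin n → Fin k × Bool),
      -- the word is reduced: no letter is followed by its inverse symbol
      (∀ i : Fin n, ∀ h : (i : ℕ) + 1 < n,
        ¬((w ⟨i + 1, h⟩).1 = (w i).1 ∧ (w ⟨i + 1, h⟩).2 ≠ (w i).2)) →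
      dist x₀ (((List.ofFn fun i =>
          if (w i).2 then g (w i).1 else (g (w i).1)⁻¹).prod) x₀) ≥ n ∧
        (1 ≤ n → (List.ofFn fun i =>
          if (w i).2 then g (w i).1 else (g (w i).1)⁻¹).prod ≠ 1) := by
  intro n w hred
  change dist x₀ ((List.ofFn fun i => letter g (w i)).prod x₀) ≥ n ∧
    (1 ≤ n → (List.ofFn fun i => letter g (w i)).prod ≠ 1)
  have hδ : GromovHyperbolic X δ := hδ
  have hδ0 : 0 ≤ δ := haveI : Nonempty X := ⟨x₀⟩; hδ.nonneg
  have hpair : ∀ i (s t : Fin k × Bool), s ≠ t →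
      2 * gromovProd x₀ (letter g s x₀) (letter g t x₀) + 18 * δ + 1 ≤ dist x₀ (g i x₀) :=
    fun i s t hst => hyp i s.1 t.1 s.2 t.2 (by simpa [Prod.ext_iff, or_iff_not_imp_left] using hst)
  have hseg : ∀ e ∈ List.ofFn fun i => letter g (w i), 16 * δ + 1 ≤ dist x₀ (e x₀) := by
    intro e he
    obtain ⟨m, rfl⟩ := List.mem_ofFn.mp he
    linarith [add_le_dist_letter hpair (w m)]
  have hcorner : ∀ m (hm : m + 1 < n), 2 * gromovProd x₀ ((letter g (w ⟨m, by omega⟩))⁻¹ x₀)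
      (letter g (w ⟨m + 1, hm⟩) x₀) + 18 * δ + 1 ≤
      min (dist x₀ (letter g (w ⟨m, by omega⟩) x₀)) (dist x₀ (letter g (w ⟨m + 1, hm⟩) x₀)) := by
    intro m hm
    have hred_m : ((w ⟨m, by omega⟩).1, !(w ⟨m, by omega⟩).2) ≠ w ⟨m + 1, hm⟩ := by
      intro heq
      exact hred ⟨m, by omega⟩ hm (by simp [← heq])
    rw [letter_inv, dist_letter, dist_letter]
    exact le_min (hpair _ _ _ hred_m) (hpair _ _ _ hred_m)
  have key := hδ.mul_le_dist_prod x₀ _ hseg (by simpa using hcorner)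
  rw [List.length_ofFn] at key
  have hn : (n : ℝ) ≤ n * (16 * δ + 1) := le_mul_of_one_le_right n.cast_nonneg (by linarith)
  refine ⟨hn.trans key, fun hn1 hprod => ?_⟩
  rw [hprod, IsometryEquiv.coe_one, id, dist_self] at key
  have : (1 : ℝ) ≤ n := by exact_mod_cast hn1
  linarith
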